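/- For bounded idempotents Q, Q' on a Hilbert space H, Q ≤⁻ Q' in the minus order if and only if range(Q) ⊆ range(Q') and range(Q*) ⊆ range(Q'*); moreover in that case Q = Q'Q = QQ'. -/

import Mathlib

/-!
An idempotent acts as the identity on its range, so `range Q ⊆ range Q'` gives `Q'Q = Q`, and
`range Q* ⊆ range Q'*` gives `Q'*Q* = Q*`, i.e. `QQ' = Q`; then `Q̃ = Q̂ = Q` witness `Q ≤⁻ Q'`.
Conversely `Q = Q'Q̂` puts `range Q` inside `range Q'`, and `Q* = Q'*Q̃*` does the same for the
adjoints.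
-/

open ContinuousLinearMap

namespace ContinuousLinearMap

theorem comp_eq_right_of_range_le {R M N : Type*} [Semiring R] [TopologicalSpace M]
    [AddCommMonoid M] [Module R M] [TopologicalSpace N] [AddCommMonoid N] [Module R N]
    {P : M →L[R] M} (hP : IsIdempotentElem P) {A : N →L[R] M}
    (h : LinearMap.range (A : N →ₗ[R] M) ≤ LinearMap.range (P : M →ₗ[R] M)) :
    P ∘L A = A :=
  coe_inj.mp ((LinearMap.IsIdempotentElem.comp_eq_right_iff hP.toLinearMap _).mpr h)

variable {𝕜 E F : Type*} [RCLike 𝕜] [NormedAddCommGroup E] [InnerProductSpace 𝕜 E]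
  [CompleteSpace E] [NormedAddCommGroup F] [InnerProductSpace 𝕜 F] [CompleteSpace F]

theorem comp_eq_left_of_range_adjoint_le {P : E →L[𝕜] E} (hP : IsIdempotentElem P)
    {A : E →L[𝕜] F}
    (h : LinearMap.range (adjoint A : F →ₗ[𝕜] E) ≤ LinearMap.range (adjoint P : E →ₗ[𝕜] E)) :
    A ∘L P = A := by
  have hP_adj : IsIdempotentElem (adjoint P) := by
    simpa only [star_eq_adjoint] using hP.star
  have := congrArg adjoint (comp_eq_right_of_range_le hP_adj h)
  rwa [adjoint_comp, adjoint_adjoint, adjoint_adjoint] at this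

end ContinuousLinearMap

theorem stmt16 {H : Type*} [NormedAddCommGroup H] [InnerProductSpace ℂ H] [CompleteSpace H]
    (Q Q' : H →L[ℂ] H) (hQ : Q ∘L Q = Q) (hQ' : Q' ∘L Q' = Q') :
    ((∃ (Qt Qh : H →L[ℂ] H),
        Qt ∘L Qt = Qt ∧ Qh ∘L Qh = Qh ∧ Q = Qt ∘L Q' ∧ Q = Q' ∘L Qh) ↔
      (LinearMap.range (Q : H →ₗ[ℂ] H) ≤ LinearMap.range (Q' : H →ₗ[ℂ] H) ∧
        LinearMap.range (adjoint Q : H →ₗ[ℂ] H) ≤ LinearMap.range (adjoint Q' : H →ₗ[ℂ] H))) ∧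
    ((LinearMap.range (Q : H →ₗ[ℂ] H) ≤ LinearMap.range (Q' : H →ₗ[ℂ] H) ∧
        LinearMap.range (adjoint Q : H →ₗ[ℂ] H) ≤ LinearMap.range (adjoint Q' : H →ₗ[ℂ] H)) →
      (Q = Q' ∘L Q ∧ Q = Q ∘L Q')) := by
  have absorb : LinearMap.range (Q : H →ₗ[ℂ] H) ≤ LinearMap.range (Q' : H →ₗ[ℂ] H) ∧
      LinearMap.range (adjoint Q : H →ₗ[ℂ] H) ≤ LinearMap.range (adjoint Q' : H →ₗ[ℂ] H) →
      Q = Q' ∘L Q ∧ Q = Q ∘L Q' := fun ⟨hr, hr_adj⟩ =>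
    ⟨(comp_eq_right_of_range_le hQ' hr).symm, (comp_eq_left_of_range_adjoint_le hQ' hr_adj).symm⟩
  refine ⟨⟨?_, fun h => ⟨Q, Q, hQ, hQ, (absorb h).2, (absorb h).1⟩⟩, absorb⟩
  rintro ⟨Qt, Qh, -, -, hQt, hQh⟩
  constructor
  · rw [hQh]
    exact LinearMap.range_comp_le_range _ _
  · rw [hQt, adjoint_comp]
    exact LinearMap.range_comp_le_range _ _
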